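/- For all integers l, p, q with 1 ≤ l ≤ q < p, the identity 2l·β(2l,p,q) = (q−l+1)·β(2l−1,p,q) + 2(p−l+1)(q−l+1)·β(2l−2,p,q) holds. -/
import Mathlib


/-- `aSeq m = Σ_{b=0}^{⌊m/2⌋} C(m,2b)·(2b)!/b!`. -/
def aSeq (m : ℕ) : ℕ :=
  ∑ b ∈ Finset.range (m / 2 + 1), Nat.choose m (2 * b) * (Nat.factorial (2 * b) / Nat.factorial b)

/-- `beta k p q` : for `k = 2l` even it is `C(n-2l, p-l)·C(n, 2l)·aSeq(2l)` when
`l ≤ min(p,q)` and `0` otherwise; for `k = 2l+1` odd it is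
`C(n-2l-1, p-l-1)·C(n, 2l+1)·aSeq(2l+1)` when `l ≤ q` and `l+1 ≤ p`, and `0` otherwise.
Here `n = p + q`. -/
def beta (k p q : ℕ) : ℕ :=
  if k % 2 = 0 then
    if k / 2 ≤ p ∧ k / 2 ≤ q then
      Nat.choose (p + q - 2 * (k / 2)) (p - k / 2) * Nat.choose (p + q) (2 * (k / 2))
        * aSeq (2 * (k / 2))
    else 0
  else
    if k / 2 ≤ q ∧ k / 2 + 1 ≤ p then
      Nat.choose (p + q - (2 * (k / 2) + 1)) (p - (k / 2 + 1))
        * Nat.choose (p + q) (2 * (k / 2) + 1) * aSeq (2 * (k / 2) + 1)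
    else 0

lemma cseq_succ (b : ℕ) :
    Nat.factorial (2 * (b + 1)) / Nat.factorial (b + 1)
      = 2 * (2 * b + 1) * (Nat.factorial (2 * b) / Nat.factorial b) := by
  obtain ⟨t, ht⟩ := Nat.factorial_dvd_factorial (show b ≤ 2 * b by omega)
  have h1 : 2 * (b + 1) = (2 * b + 1) + 1 := by ring
  rw [h1, Nat.factorial_succ, Nat.factorial_succ, Nat.factorial_succ, ht,
    Nat.mul_div_cancel_left t (Nat.factorial_pos b)]
  have h2 : (2 * b + 1 + 1) * ((2 * b + 1) * (Nat.factorial b * t))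
      = ((b + 1) * Nat.factorial b) * (2 * (2 * b + 1) * t) := by ring
  rw [h2, Nat.mul_div_cancel_left]
  positivity

lemma aSeq_ext (m N : ℕ) (h : m / 2 + 1 ≤ N) :
    aSeq m = ∑ b ∈ Finset.range N,
      Nat.choose m (2 * b) * (Nat.factorial (2 * b) / Nat.factorial b) := by
  rw [aSeq]
  apply Finset.sum_subset (Finset.range_subset_range.2 h)
  intro b _ hnb
  simp only [Finset.mem_range, not_lt] at hnb
  have : m < 2 * b := by omega
  simp [Nat.choose_eq_zero_of_lt this]

lemma key_term (m b : ℕ) (h : 2 * b ≤ m) :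
    (2 * b + 1) * (Nat.choose m (2 * b) + Nat.choose m (2 * b + 1))
      = (m + 1) * Nat.choose m (2 * b) := by
  have h1 := Nat.choose_succ_right_eq m (2 * b)
  have h2 : (2 * b + 1) + (m - 2 * b) = m + 1 := by omega
  calc (2 * b + 1) * (Nat.choose m (2 * b) + Nat.choose m (2 * b + 1))
      = (2 * b + 1) * Nat.choose m (2 * b) + Nat.choose m (2 * b + 1) * (2 * b + 1) := by ring
    _ = (2 * b + 1) * Nat.choose m (2 * b) + (m - 2 * b) * Nat.choose m (2 * b) := by
        rw [h1]; ring
    _ = ((2 * b + 1) + (m - 2 * b)) * Nat.choose m (2 * b) := by ring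
    _ = (m + 1) * Nat.choose m (2 * b) := by rw [h2]

lemma aSeq_rec (m : ℕ) : aSeq (m + 2) = aSeq (m + 1) + 2 * (m + 1) * aSeq m := by
  set K := m / 2 + 1 with hK
  rw [aSeq_ext (m + 2) (K + 1) (by omega), aSeq_ext (m + 1) (K + 1) (by omega),
    aSeq_ext m K (by omega), Finset.sum_range_succ' _ K, Finset.sum_range_succ' _ K]
  simp only [Nat.mul_zero, Nat.choose_zero_right, Nat.factorial_zero, Nat.div_one,
    Nat.mul_one, Nat.one_mul]
  rw [Finset.mul_sum, add_right_comm, ← Finset.sum_add_distrib]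
  congr 1
  apply Finset.sum_congr rfl
  intro b hb
  have h2b : 2 * b ≤ m := by
    have := Finset.mem_range.1 hb
    omega
  have hsplit : Nat.choose (m + 2) (2 * (b + 1))
      = Nat.choose (m + 1) (2 * (b + 1)) + (Nat.choose m (2 * b) + Nat.choose m (2 * b + 1)) := by
    have e : 2 * (b + 1) = (2 * b + 1) + 1 := by ring
    rw [e, show m + 2 = (m + 1) + 1 from rfl, Nat.choose_succ_succ,
      Nat.choose_succ_succ m (2 * b)]
    ring
  rw [hsplit, Nat.add_mul, cseq_succ b]
  congr 1
  calc (Nat.choose m (2 * b) + Nat.choose m (2 * b + 1))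
        * (2 * (2 * b + 1) * (Nat.factorial (2 * b) / Nat.factorial b))
      = 2 * ((2 * b + 1) * (Nat.choose m (2 * b) + Nat.choose m (2 * b + 1)))
          * (Nat.factorial (2 * b) / Nat.factorial b) := by ring
    _ = 2 * ((m + 1) * Nat.choose m (2 * b))
          * (Nat.factorial (2 * b) / Nat.factorial b) := by rw [key_term m b h2b]
    _ = 2 * (m + 1) * (Nat.choose m (2 * b)
          * (Nat.factorial (2 * b) / Nat.factorial b)) := by ring

lemma beta_even_eq (l p q : ℕ) (h1 : l ≤ p) (h2 : l ≤ q) :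
    beta (2 * l) p q
      = Nat.choose (p + q - 2 * l) (p - l) * Nat.choose (p + q) (2 * l) * aSeq (2 * l) := by
  have hm : (2 * l) % 2 = 0 := by omega
  have hd : (2 * l) / 2 = l := by omega
  rw [beta, if_pos hm, hd, if_pos ⟨h1, h2⟩]

lemma beta_odd_eq (l p q : ℕ) (h2 : l ≤ q) (h3 : l + 1 ≤ p) :
    beta (2 * l + 1) p q
      = Nat.choose (p + q - (2 * l + 1)) (p - (l + 1)) * Nat.choose (p + q) (2 * l + 1)
          * aSeq (2 * l + 1) := by
  have hm : ¬(2 * l + 1) % 2 = 0 := by omega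
  have hd : (2 * l + 1) / 2 = l := by omega
  rw [beta, if_neg hm, hd, if_pos ⟨h2, h3⟩]

theorem beta_even_mixed_recurrence (l p q : ℕ) (hl : 1 ≤ l) (hlq : l ≤ q) (hqp : q < p) :
    2 * l * beta (2 * l) p q
      = (q - l + 1) * beta (2 * l - 1) p q
        + 2 * (p - l + 1) * (q - l + 1) * beta (2 * l - 2) p q := by
  obtain ⟨m, rfl⟩ : ∃ m, l = m + 1 := ⟨l - 1, by omega⟩
  obtain ⟨j, rfl⟩ : ∃ j, q = m + 1 + j := ⟨q - (m + 1), by omega⟩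
  obtain ⟨r, rfl⟩ : ∃ r, p = m + 2 + j + r := ⟨p - (m + 2 + j), by omega⟩
  rw [show 2 * (m + 1) - 1 = 2 * m + 1 from by omega,
    show 2 * (m + 1) - 2 = 2 * m from by omega,
    beta_even_eq (m + 1) _ _ (by omega) (by omega),
    beta_odd_eq m _ _ (by omega) (by omega),
    beta_even_eq m _ _ (by omega) (by omega)]
  set n := m + 2 + j + r + (m + 1 + j) with hn
  have e1 : Nat.choose (n - 2 * (m + 1)) (m + 2 + j + r - (m + 1))
      = Nat.choose (2 * j + r + 1) (j + r + 1) := by congr 1 <;> omega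
  have e2 : Nat.choose (n - (2 * m + 1)) (m + 2 + j + r - (m + 1))
      = Nat.choose (2 * j + r + 2) (j + r + 1) := by congr 1 <;> omega
  have e3 : Nat.choose (n - 2 * m) (m + 2 + j + r - m)
      = Nat.choose (2 * j + r + 3) (j + r + 2) := by congr 1 <;> omega
  rw [e1, e2, e3, show m + 1 + j - (m + 1) + 1 = j + 1 from by omega,
    show m + 2 + j + r - (m + 1) + 1 = j + r + 2 from by omega,
    show 2 * (m + 1) = 2 * m + 2 from by ring, aSeq_rec (2 * m)]
  have h1 : Nat.choose n (2 * m + 2) * (2 * m + 2)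
      = Nat.choose n (2 * m + 1) * (2 * j + r + 2) := by
    have h := Nat.choose_succ_right_eq n (2 * m + 1)
    rw [show 2 * m + 1 + 1 = 2 * m + 2 from by ring,
      show n - (2 * m + 1) = 2 * j + r + 2 from by omega] at h
    exact h
  have h2 : Nat.choose n (2 * m + 1) * (2 * m + 1)
      = Nat.choose n (2 * m) * (2 * j + r + 3) := by
    have h := Nat.choose_succ_right_eq n (2 * m)
    rw [show n - 2 * m = 2 * j + r + 3 from by omega] at h
    exact h
  have h3 : Nat.choose (2 * j + r + 2) (j + r + 1) * (j + 1)
      = Nat.choose (2 * j + r + 1) (j + r + 1) * (2 * j + r + 2) := by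
    have h := Nat.choose_mul_succ_eq (2 * j + r + 1) (j + r + 1)
    rw [show 2 * j + r + 1 + 1 = 2 * j + r + 2 from by ring,
      show 2 * j + r + 2 - (j + r + 1) = j + 1 from by omega] at h
    exact h.symm
  have h4 : Nat.choose (2 * j + r + 3) (j + r + 2) * (j + r + 2)
      = Nat.choose (2 * j + r + 2) (j + r + 1) * (2 * j + r + 3) := by
    have h := Nat.add_one_mul_choose_eq (2 * j + r + 2) (j + r + 1)
    rw [show 2 * j + r + 2 + 1 = 2 * j + r + 3 from by ring,
      show j + r + 1 + 1 = j + r + 2 from by ring] at h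
    exact h.symm.trans (mul_comm _ _)
  zify at h1 h2 h3 h4 ⊢
  set X := (Nat.choose (2 * j + r + 1) (j + r + 1) : ℤ)
  set Y := (Nat.choose (2 * j + r + 2) (j + r + 1) : ℤ)
  set Z := (Nat.choose (2 * j + r + 3) (j + r + 2) : ℤ)
  set B2 := (Nat.choose n (2 * m + 2) : ℤ)
  set B1 := (Nat.choose n (2 * m + 1) : ℤ)
  set B0 := (Nat.choose n (2 * m) : ℤ)
  set a1 := (aSeq (2 * m + 1) : ℤ)
  set a0 := (aSeq (2 * m) : ℤ)
  linear_combination (X * a1 + 2 * (2 * m + 1) * X * a0) * h1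
    + (2 * X * (2 * j + r + 2) * a0) * h2
    + (-(B1 * a1) - 2 * (2 * j + r + 3) * B0 * a0) * h3
    + (-(2 * (j + 1) * B0 * a0)) * h4
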